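/- arXiv:0905.3085 — 5 statements merged into one kernel-verified Lean document; each statement's English description precedes it below -/
import Mathlib

section
/- Let $S/R$ be a finite extension of discrete valuation rings with fraction field extension $L/K$ separable, ramification index $e$, and let $w = v_L(\mathcal{D}_{S/R})$ be the valuation of the different. Then there exists $x_1 \in L$ with $v_L(x_1) = e - w - 1$ and $\mathrm{Tr}_{L/K}(x_1) = 1$. -/
/-- Let `S/R` be a finite extension of discrete valuation rings whose fraction
field extension `L/K` is separable, with ramification index `e`, and let `w = v_L(𝒟_{S/R})`.
(The data is encoded through the normalized valuations `vK`, `vL` of `R` and `S`; the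
valuation `w` of the different is characterized by `Tr(Π^{-w} S) ⊆ R` and
`Tr(Π^{-w-1} S) ⊄ R`.) Then there exists `x₁ ∈ L` with `v_L(x₁) = e - w - 1` and
`Tr_{L/K}(x₁) = 1`. -/
theorem stmt_9 (K L : Type*) [Field K] [Field L] [Algebra K L]
    [FiniteDimensional K L] [Algebra.IsSeparable K L]
    (vK : K → ℤ) (vL : L → ℤ) (e : ℕ) (he : 1 ≤ e) (w : ℤ)
    -- `vK` is a normalized discrete valuation on `K`:
    (hKmul : ∀ a b : K, a ≠ 0 → b ≠ 0 → vK (a * b) = vK a + vK b)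
    (hKadd : ∀ a b : K, a ≠ 0 → b ≠ 0 → a + b ≠ 0 → min (vK a) (vK b) ≤ vK (a + b))
    (hKsurj : ∀ n : ℤ, ∃ a : K, a ≠ 0 ∧ vK a = n)
    -- `vL` is a normalized discrete valuation on `L`:
    (hLmul : ∀ x y : L, x ≠ 0 → y ≠ 0 → vL (x * y) = vL x + vL y)
    (hLadd : ∀ x y : L, x ≠ 0 → y ≠ 0 → x + y ≠ 0 → min (vL x) (vL y) ≤ vL (x + y))
    (hLsurj : ∀ n : ℤ, ∃ x : L, x ≠ 0 ∧ vL x = n)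
    -- `e` is the ramification index:
    (hcomp : ∀ a : K, a ≠ 0 → vL (algebraMap K L a) = e * vK a)
    -- `w` is the valuation of the different `𝒟_{S/R}`:
    (hw1 : ∀ x : L, x ≠ 0 → -w ≤ vL x → Algebra.trace K L x ≠ 0 →
      0 ≤ vK (Algebra.trace K L x))
    (hw2 : ∃ x : L, x ≠ 0 ∧ -w - 1 ≤ vL x ∧ Algebra.trace K L x ≠ 0 ∧
      vK (Algebra.trace K L x) < 0) :
    ∃ x₁ : L, x₁ ≠ 0 ∧ vL x₁ = e - w - 1 ∧ Algebra.trace K L x₁ = 1 := by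
  obtain ⟨x, hx0, hxv, ht0, htneg⟩ := hw2
  set t := Algebra.trace K L x with htdef
  -- vK 1 = 0
  have hK1 : vK 1 = 0 := by
    have := hKmul 1 1 one_ne_zero one_ne_zero
    simpa using this.symm
  -- vL x = -w - 1
  have hxvL : vL x = -w - 1 := by
    rcases lt_or_ge (vL x) (-w) with h | h
    · omega
    · have := hw1 x hx0 h ht0
      rw [← htdef] at this; omega
  -- vK t = -1
  have hm : vK t = -1 := by
    by_contra hne
    have hm2 : vK t ≤ -2 := by omega
    obtain ⟨a, ha0, hav⟩ := hKsurj (-(vK t) - 1)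
    have haL : algebraMap K L a ≠ 0 := (map_ne_zero _).mpr ha0
    set y := algebraMap K L a * x with hy
    have hy0 : y ≠ 0 := mul_ne_zero haL hx0
    have hyv : vL y = e * (-(vK t) - 1) + (-w - 1) := by
      rw [hy, hLmul _ _ haL hx0, hcomp a ha0, hav, hxvL]
    have hty : Algebra.trace K L y = a * t := by
      rw [hy, ← Algebra.smul_def, map_smul, smul_eq_mul, htdef]
    have hty0 : Algebra.trace K L y ≠ 0 := by
      rw [hty]; exact mul_ne_zero ha0 ht0
    have hvty : vK (Algebra.trace K L y) = -1 := by
      rw [hty, hKmul a t ha0 ht0, hav]; ring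
    have hge : -w ≤ vL y := by
      have : (1 : ℤ) ≤ e := by exact_mod_cast he
      have h1 : (1 : ℤ) ≤ -(vK t) - 1 := by omega
      have : (e : ℤ) * 1 ≤ e * (-(vK t) - 1) :=
        mul_le_mul_of_nonneg_left h1 (by omega)
      omega
    have := hw1 y hy0 hge hty0
    omega
  -- vK t⁻¹ = 1
  have htinv0 : t⁻¹ ≠ 0 := inv_ne_zero ht0
  have hvinv : vK t⁻¹ = 1 := by
    have := hKmul t t⁻¹ ht0 htinv0
    rw [mul_inv_cancel₀ ht0, hK1, hm] at this
    omega
  refine ⟨algebraMap K L t⁻¹ * x, mul_ne_zero ((map_ne_zero _).mpr htinv0) hx0, ?_, ?_⟩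
  · rw [hLmul _ _ ((map_ne_zero _).mpr htinv0) hx0, hcomp _ htinv0, hvinv, hxvL]
    ring
  · rw [← Algebra.smul_def, map_smul, smul_eq_mul, ← htdef, inv_mul_cancel₀ ht0]
end

section
/- Let $S/R$ be a finite extension of discrete valuation rings with separable fraction field extension $L/K$ of ramification index $e$, and $w = v_L(\mathcal{D}_{S/R})$. Then there exist elements $x_1, \dots, x_e \in L$ with $v_L(x_i) = e - w - i$ for $1 \leq i \leq e$, $\mathrm{Tr}_{L/K}(x_1) = 1$, and $\mathrm{Tr}_{L/K}(x_i) = 0$ for $2 \leq i \leq e$. -/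
/-- With the setup of a finite extension of discrete valuation rings as in
Statement 9: there exist `x_1, …, x_e ∈ L` with `v_L(x_i) = e - w - i` for `1 ≤ i ≤ e`,
`Tr_{L/K}(x_1) = 1`, and `Tr_{L/K}(x_i) = 0` for `2 ≤ i ≤ e`. -/
theorem stmt_10 (K L : Type*) [Field K] [Field L] [Algebra K L]
    [FiniteDimensional K L] [Algebra.IsSeparable K L]
    (vK : K → ℤ) (vL : L → ℤ) (e : ℕ) (he : 1 ≤ e) (w : ℤ)
    -- `vK` is a normalized discrete valuation on `K`:
    (hKmul : ∀ a b : K, a ≠ 0 → b ≠ 0 → vK (a * b) = vK a + vK b)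
    (hKadd : ∀ a b : K, a ≠ 0 → b ≠ 0 → a + b ≠ 0 → min (vK a) (vK b) ≤ vK (a + b))
    (hKsurj : ∀ n : ℤ, ∃ a : K, a ≠ 0 ∧ vK a = n)
    -- `vL` is a normalized discrete valuation on `L`:
    (hLmul : ∀ x y : L, x ≠ 0 → y ≠ 0 → vL (x * y) = vL x + vL y)
    (hLadd : ∀ x y : L, x ≠ 0 → y ≠ 0 → x + y ≠ 0 → min (vL x) (vL y) ≤ vL (x + y))
    (hLsurj : ∀ n : ℤ, ∃ x : L, x ≠ 0 ∧ vL x = n)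
    -- `e` is the ramification index:
    (hcomp : ∀ a : K, a ≠ 0 → vL (algebraMap K L a) = e * vK a)
    -- `w` is the valuation of the different `𝒟_{S/R}`:
    (hw1 : ∀ x : L, x ≠ 0 → -w ≤ vL x → Algebra.trace K L x ≠ 0 →
      0 ≤ vK (Algebra.trace K L x))
    (hw2 : ∃ x : L, x ≠ 0 ∧ -w - 1 ≤ vL x ∧ Algebra.trace K L x ≠ 0 ∧
      vK (Algebra.trace K L x) < 0) :
    ∃ x : ℕ → L,
      (∀ i : ℕ, 1 ≤ i → i ≤ e → x i ≠ 0 ∧ vL (x i) = e - w - i) ∧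
      Algebra.trace K L (x 1) = 1 ∧
      (∀ i : ℕ, 2 ≤ i → i ≤ e → Algebra.trace K L (x i) = 0) := by
  classical
  have hK1 : vK 1 = 0 := by
    have h := hKmul 1 1 one_ne_zero one_ne_zero
    rw [one_mul] at h; linarith
  have hL1 : vL 1 = 0 := by
    have h := hLmul 1 1 one_ne_zero one_ne_zero
    rw [one_mul] at h; linarith
  have hLneg : ∀ x : L, x ≠ 0 → vL (-x) = vL x := by
    intro x hx
    have hm1 : vL (-1 : L) = 0 := by
      have h := hLmul (-1) (-1) (by norm_num) (by norm_num)
      rw [neg_mul_neg, one_mul, hL1] at h; linarith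
    have h := hLmul (-1) x (by norm_num) hx
    rw [neg_one_mul, hm1] at h; linarith
  have hLlt : ∀ a b : L, a ≠ 0 → b ≠ 0 → vL a < vL b → a + b ≠ 0 ∧ vL (a + b) = vL a := by
    intro a b ha hb hab
    have hne : a + b ≠ 0 := by
      intro h
      have hb' : b = -a := by linear_combination h
      rw [hb', hLneg a ha] at hab; exact lt_irrefl _ hab
    refine ⟨hne, ?_⟩
    have h1 := hLadd a b ha hb hne
    have h2 := hLadd (a + b) (-b) hne (neg_ne_zero.mpr hb) (by simpa using ha)
    rw [add_neg_cancel_right, hLneg b hb] at h2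
    rcases min_cases (vL (a + b)) (vL b) with ⟨h3, _⟩ | ⟨h3, h4⟩ <;>
      rw [h3] at h2 <;> omega
  have hKinv : ∀ t : K, t ≠ 0 → vK t⁻¹ = -vK t := by
    intro t ht
    have h := hKmul t t⁻¹ ht (inv_ne_zero ht)
    rw [mul_inv_cancel₀ ht, hK1] at h; linarith
  have halg : ∀ a : K, a ≠ 0 → algebraMap K L a ≠ 0 := by
    intro a ha
    simpa using (map_ne_zero (algebraMap K L)).mpr ha
  have htr : ∀ (c : K) (x : L),
      Algebra.trace K L (algebraMap K L c * x) = c * Algebra.trace K L x := by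
    intro c x
    rw [← Algebra.smul_def, map_smul, smul_eq_mul]
  obtain ⟨y, hy0, hyv, hyt, hyk⟩ := hw2
  -- vL y = -w - 1
  have hyv' : vL y = -w - 1 := by
    by_contra h
    have h' : -w ≤ vL y := by omega
    have := hw1 y hy0 h' hyt
    omega
  -- vK (Tr y) = -1
  have hyk' : vK (Algebra.trace K L y) = -1 := by
    obtain ⟨a, ha0, hav⟩ := hKsurj 1
    have hy'0 : algebraMap K L a * y ≠ 0 := mul_ne_zero (halg a ha0) hy0
    have hy'v : vL (algebraMap K L a * y) = e - w - 1 := by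
      rw [hLmul _ _ (halg a ha0) hy0, hcomp a ha0, hav, hyv']; ring
    have hy't : Algebra.trace K L (algebraMap K L a * y) ≠ 0 := by
      rw [htr]; exact mul_ne_zero ha0 hyt
    have h0 := hw1 _ hy'0 (by rw [hy'v]; push_cast; omega) hy't
    rw [htr, hKmul a _ ha0 hyt, hav] at h0
    omega
  set t := Algebra.trace K L y with ht_def
  set x₁ := algebraMap K L t⁻¹ * y with hx₁_def
  have hx₁0 : x₁ ≠ 0 := mul_ne_zero (halg _ (inv_ne_zero hyt)) hy0
  have hx₁v : vL x₁ = e - w - 1 := by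
    rw [hx₁_def, hLmul _ _ (halg _ (inv_ne_zero hyt)) hy0,
      hcomp _ (inv_ne_zero hyt), hKinv t hyt, hyk', hyv']; ring
  have hx₁t : Algebra.trace K L x₁ = 1 := by
    rw [hx₁_def, htr, ← ht_def, inv_mul_cancel₀ hyt]
  set z : ℕ → L := fun i => (hLsurj ((e : ℤ) - w - i)).choose with hz_def
  have hz : ∀ i : ℕ, z i ≠ 0 ∧ vL (z i) = (e : ℤ) - w - i :=
    fun i => (hLsurj ((e : ℤ) - w - i)).choose_spec
  set x : ℕ → L := fun i =>
    if i = 1 then x₁ else z i - algebraMap K L (Algebra.trace K L (z i)) * x₁ with hx_def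
  refine ⟨x, ?_, ?_, ?_⟩
  · intro i h1 hie
    by_cases hi1 : i = 1
    · subst hi1
      refine ⟨by simpa [hx_def] using hx₁0, ?_⟩
      simp only [hx_def, if_pos rfl]
      rw [hx₁v]; push_cast; ring
    · have h2 : 2 ≤ i := by omega
      obtain ⟨hz0, hzv⟩ := hz i
      have hxi : x i = z i - algebraMap K L (Algebra.trace K L (z i)) * x₁ := by
        simp [hx_def, hi1]
      by_cases hc : Algebra.trace K L (z i) = 0
      · rw [hxi, hc, map_zero, zero_mul, sub_zero]
        exact ⟨hz0, hzv⟩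
      · have hcK : 0 ≤ vK (Algebra.trace K L (z i)) := by
          refine hw1 (z i) hz0 ?_ hc
          rw [hzv]
          have : (i : ℤ) ≤ e := by exact_mod_cast hie
          omega
        set c := Algebra.trace K L (z i) with hc_def
        have hb0 : algebraMap K L c * x₁ ≠ 0 := mul_ne_zero (halg c hc) hx₁0
        have hbv : vL (algebraMap K L c * x₁) = e * vK c + (e - w - 1) := by
          rw [hLmul _ _ (halg c hc) hx₁0, hcomp c hc, hx₁v]
        have hlt : vL (z i) < vL (-(algebraMap K L c * x₁)) := by
          rw [hLneg _ hb0, hbv, hzv]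
          have h1' : (0 : ℤ) ≤ (e : ℤ) * vK c := mul_nonneg (by positivity) hcK
          have h2' : (2 : ℤ) ≤ (i : ℤ) := by exact_mod_cast h2
          linarith
        obtain ⟨hne, hv⟩ := hLlt (z i) (-(algebraMap K L c * x₁)) hz0
          (neg_ne_zero.mpr hb0) hlt
        rw [← sub_eq_add_neg] at hne hv
        rw [hxi]
        exact ⟨hne, by rw [hv, hzv]⟩
  · simp only [hx_def, if_pos rfl]
    exact hx₁t
  · intro i h2 hie
    have hi1 : i ≠ 1 := by omega
    simp only [hx_def, if_neg hi1]
    rw [map_sub, htr, hx₁t, mul_one, sub_self]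
end

section
/- Let $S/R$ be a finite totally ramified extension of discrete valuation rings of degree $n = p^m$ (a power of $p = \mathrm{char}(K) > 0$), with $L/K$ the separable fraction field extension and $w = v_L(\mathcal{D}_{S/R})$. Then every $\rho \in L$ with $v_L(\rho) \equiv -w - 1 \pmod{n}$ satisfies $\mathrm{Tr}_{L/K}(\rho) \neq 0$. -/
section aux
variable {L : Type*} [Field L]

lemma aux_val_one (vL : L → ℤ)
    (hmul : ∀ x y : L, x ≠ 0 → y ≠ 0 → vL (x * y) = vL x + vL y) :
    vL 1 = 0 := by
  have h := hmul 1 1 one_ne_zero one_ne_zero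
  rw [mul_one] at h
  omega

lemma aux_val_neg (vL : L → ℤ)
    (hmul : ∀ x y : L, x ≠ 0 → y ≠ 0 → vL (x * y) = vL x + vL y)
    (x : L) (hx : x ≠ 0) : vL (-x) = vL x := by
  have h1 := hmul (-1 : L) (-1) (by norm_num) (by norm_num)
  rw [neg_one_mul, neg_neg, aux_val_one vL hmul] at h1
  have h2 := hmul (-1 : L) x (by norm_num) hx
  rw [neg_one_mul] at h2
  omega

lemma aux_val_inv (vL : L → ℤ)
    (hmul : ∀ x y : L, x ≠ 0 → y ≠ 0 → vL (x * y) = vL x + vL y)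
    (x : L) (hx : x ≠ 0) : vL x⁻¹ = - vL x := by
  have h := hmul x x⁻¹ hx (inv_ne_zero hx)
  rw [mul_inv_cancel₀ hx, aux_val_one vL hmul] at h
  omega

lemma aux_add_distinct (vL : L → ℤ)
    (hmul : ∀ x y : L, x ≠ 0 → y ≠ 0 → vL (x * y) = vL x + vL y)
    (hadd : ∀ x y : L, x ≠ 0 → y ≠ 0 → x + y ≠ 0 → min (vL x) (vL y) ≤ vL (x + y))
    (x y : L) (hx : x ≠ 0) (hy : y ≠ 0) (hne : vL x ≠ vL y) :
    x + y ≠ 0 ∧ vL (x + y) = min (vL x) (vL y) := by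
  have hxy : x + y ≠ 0 := by
    intro h
    have hx' : x = -y := by linear_combination h
    rw [hx', aux_val_neg vL hmul y hy] at hne
    exact hne rfl
  refine ⟨hxy, ?_⟩
  have h1 := hadd x y hx hy hxy
  have h3 : min (vL (x + y)) (vL y) ≤ vL x := by
    have h := hadd (x + y) (-y) hxy (neg_ne_zero.mpr hy) (by simpa using hx)
    rw [aux_val_neg vL hmul y hy] at h
    simpa using h
  have h4 : min (vL (x + y)) (vL x) ≤ vL y := by
    have h := hadd (x + y) (-x) hxy (neg_ne_zero.mpr hx)
      (by intro hc; apply hy; linear_combination hc)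
    rw [aux_val_neg vL hmul x hx] at h
    have he : x + y + -x = y := by ring
    rw [he] at h
    exact h
  omega

lemma aux_sum_distinct {ι : Type*} [DecidableEq ι] (vL : L → ℤ)
    (hmul : ∀ x y : L, x ≠ 0 → y ≠ 0 → vL (x * y) = vL x + vL y)
    (hadd : ∀ x y : L, x ≠ 0 → y ≠ 0 → x + y ≠ 0 → min (vL x) (vL y) ≤ vL (x + y))
    (F : Finset ι) :
    ∀ t : ι → L, F.Nonempty → (∀ i ∈ F, t i ≠ 0) →
    (∀ i ∈ F, ∀ j ∈ F, vL (t i) = vL (t j) → i = j) →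
    (∑ i ∈ F, t i) ≠ 0 ∧ ∃ i ∈ F, vL (∑ i ∈ F, t i) = vL (t i) := by
  induction F using Finset.induction_on with
  | empty => intro t h; simp at h
  | @insert a F' ha ih =>
    intro t _ ht hinj
    rcases F'.eq_empty_or_nonempty with rfl | hF'
    · refine ⟨by simpa using ht a (by simp), a, by simp, by simp⟩
    · obtain ⟨hne', i₀, hi₀F, hvi₀⟩ := ih t hF' (fun i hi => ht i (by simp [hi]))
        (fun i hi j hj h => hinj i (by simp [hi]) j (by simp [hj]) h)
      have hta : t a ≠ 0 := ht a (by simp)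
      have hsum : ∑ i ∈ insert a F', t i = t a + ∑ i ∈ F', t i := Finset.sum_insert ha
      have hvne : vL (t a) ≠ vL (∑ i ∈ F', t i) := by
        rw [hvi₀]
        intro h
        exact ha (by rw [hinj a (by simp) i₀ (by simp [hi₀F]) h]; exact hi₀F)
      obtain ⟨h1, h2⟩ := aux_add_distinct vL hmul hadd _ _ hta hne' hvne
      refine ⟨by rw [hsum]; exact h1, ?_⟩
      rcases le_total (vL (t a)) (vL (∑ i ∈ F', t i)) with h | h
      · exact ⟨a, by simp, by rw [hsum, h2]; omega⟩
      · exact ⟨i₀, by simp [hi₀F], by rw [hsum, h2, ← hvi₀]; omega⟩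

end aux

/-- Let `S/R` be a finite totally ramified extension of discrete valuation
rings of degree `n = p ^ m` (a power of `p = char K > 0`), with `L/K` the separable fraction
field extension and `w = v_L(𝒟_{S/R})`. Then every `ρ ∈ L` with
`v_L(ρ) ≡ -w - 1 (mod n)` satisfies `Tr_{L/K}(ρ) ≠ 0`. -/
theorem stmt_13 (K L : Type*) [Field K] [Field L] [Algebra K L]
    [FiniteDimensional K L] [Algebra.IsSeparable K L]
    (p : ℕ) [Fact p.Prime] [CharP K p]
    (n m : ℕ) (hnp : n = p ^ m) (w : ℤ)
    (hdeg : Module.finrank K L = n)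
    (vK : K → ℤ) (vL : L → ℤ)
    -- `vK` is a normalized discrete valuation on `K`:
    (hKmul : ∀ a b : K, a ≠ 0 → b ≠ 0 → vK (a * b) = vK a + vK b)
    (hKadd : ∀ a b : K, a ≠ 0 → b ≠ 0 → a + b ≠ 0 → min (vK a) (vK b) ≤ vK (a + b))
    (hKsurj : ∀ j : ℤ, ∃ a : K, a ≠ 0 ∧ vK a = j)
    -- `vL` is a normalized discrete valuation on `L`:
    (hLmul : ∀ x y : L, x ≠ 0 → y ≠ 0 → vL (x * y) = vL x + vL y)
    (hLadd : ∀ x y : L, x ≠ 0 → y ≠ 0 → x + y ≠ 0 → min (vL x) (vL y) ≤ vL (x + y))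
    (hLsurj : ∀ j : ℤ, ∃ x : L, x ≠ 0 ∧ vL x = j)
    -- total ramification: the ramification index equals `n = [L:K]`:
    (hcomp : ∀ a : K, a ≠ 0 → vL (algebraMap K L a) = n * vK a)
    -- `w` is the valuation of the different `𝒟_{S/R}`:
    (hw1 : ∀ x : L, x ≠ 0 → -w ≤ vL x → Algebra.trace K L x ≠ 0 →
      0 ≤ vK (Algebra.trace K L x))
    (hw2 : ∃ x : L, x ≠ 0 ∧ -w - 1 ≤ vL x ∧ Algebra.trace K L x ≠ 0 ∧
      vK (Algebra.trace K L x) < 0) :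
    ∀ ρ : L, ρ ≠ 0 → vL ρ ≡ -w - 1 [ZMOD (n : ℤ)] → Algebra.trace K L ρ ≠ 0 := by
  classical
  intro ρ hρ hmod htr
  have hn1 : 1 ≤ n := hnp ▸ Nat.one_le_pow _ _ (Fact.out (p := p.Prime)).pos
  have hnz : (n : ℤ) ≠ 0 := by exact_mod_cast (by omega : n ≠ 0)
  -- the element x of valuation exactly -w-1 with trace of negative valuation
  obtain ⟨x, hx0, hxv, hxtr, hxk⟩ := hw2
  have hxval : vL x = -w - 1 := by
    rcases lt_or_ge (vL x) (-w) with h | h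
    · omega
    · exact absurd (hw1 x hx0 h hxtr) (by omega)
  -- normalize ρ to u of valuation exactly -w-1 with trace 0
  obtain ⟨k, hk⟩ : (n : ℤ) ∣ (-w - 1) - vL ρ := hmod.dvd
  obtain ⟨a, ha0, hav⟩ := hKsurj k
  have hA0 : algebraMap K L a ≠ 0 := (map_ne_zero _).mpr ha0
  set u := algebraMap K L a * ρ with hu
  have hu0 : u ≠ 0 := mul_ne_zero hA0 hρ
  have huval : vL u = -w - 1 := by
    rw [hu, hLmul _ ρ hA0 hρ, hcomp a ha0, hav]; omega
  have hutr : Algebra.trace K L u = 0 := by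
    rw [hu, ← Algebra.smul_def, map_smul, htr, smul_zero]
  -- s := u / x has valuation 0 and is "transcendental mod the maximal ideal"
  set s := u * x⁻¹ with hs
  have hs0 : s ≠ 0 := mul_ne_zero hu0 (inv_ne_zero hx0)
  have hsval : vL s = 0 := by
    rw [hs, hLmul u x⁻¹ hu0 (inv_ne_zero hx0), aux_val_inv vL hLmul x hx0, huval, hxval]
    ring
  -- Claim A
  have claimA : ∀ c : K, s - algebraMap K L c ≠ 0 ∧ vL (s - algebraMap K L c) ≤ 0 := by
    intro c
    have hsc : s ≠ algebraMap K L c := by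
      intro h
      have hux : u = algebraMap K L c * x := by
        rw [← h, hs, mul_assoc, inv_mul_cancel₀ hx0, mul_one]
      have htr2 : Algebra.trace K L u = c * Algebra.trace K L x := by
        rw [hux, ← Algebra.smul_def, map_smul, smul_eq_mul]
      rw [hutr] at htr2
      rcases mul_eq_zero.mp htr2.symm with rfl | h'
      · rw [map_zero] at h
        exact hs0 h
      · exact hxtr h'
    have hne0 : s - algebraMap K L c ≠ 0 := sub_ne_zero_of_ne hsc
    refine ⟨hne0, ?_⟩
    by_contra hgt
    push_neg at hgt
    by_cases hc : c = 0
    · rw [hc, map_zero, sub_zero, hsval] at hgt; omega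
    have hAc0 : algebraMap K L c ≠ 0 := (map_ne_zero _).mpr hc
    by_cases hvc : vK c = 0
    · -- trace argument
      set z := u - algebraMap K L c * x with hz
      have hzx : z = (s - algebraMap K L c) * x := by
        rw [hz, hs, sub_mul, mul_assoc, inv_mul_cancel₀ hx0, mul_one]
      have hz0 : z ≠ 0 := by rw [hzx]; exact mul_ne_zero hne0 hx0
      have hzge : -w ≤ vL z := by
        rw [hzx, hLmul _ _ hne0 hx0, hxval]; omega
      have hztr : Algebra.trace K L z = -(c * Algebra.trace K L x) := by
        rw [hz, map_sub, hutr, ← Algebra.smul_def, map_smul, smul_eq_mul, zero_sub]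
      have hztr0 : Algebra.trace K L z ≠ 0 := by
        rw [hztr]
        exact neg_ne_zero.mpr (mul_ne_zero hc hxtr)
      have hge := hw1 z hz0 hzge hztr0
      rw [hztr, aux_val_neg vK hKmul _ (mul_ne_zero hc hxtr),
        hKmul c _ hc hxtr, hvc] at hge
      omega
    · -- distinct valuations
      have hdist : vL s ≠ vL (-(algebraMap K L c)) := by
        rw [aux_val_neg vL hLmul _ hAc0, hsval, hcomp c hc]
        intro h
        rcases mul_eq_zero.mp h.symm with h' | h'
        · exact hnz h'
        · exact hvc h'
      obtain ⟨_, hmin⟩ := aux_add_distinct vL hLmul hLadd s (-(algebraMap K L c)) hs0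
        (neg_ne_zero.mpr hAc0) hdist
      rw [← sub_eq_add_neg] at hmin
      rw [hmin, aux_val_neg vL hLmul _ hAc0, hsval] at hgt
      omega
  -- Claim B
  have claimB : ∀ a b : K, ¬(a = 0 ∧ b = 0) →
      algebraMap K L a + algebraMap K L b * s ≠ 0 ∧
      ∃ j : ℤ, vL (algebraMap K L a + algebraMap K L b * s) = n * j := by
    intro a b hab
    by_cases hb : b = 0
    · have ha : a ≠ 0 := by tauto
      rw [hb]
      simp only [map_zero, zero_mul, add_zero]
      exact ⟨(map_ne_zero _).mpr ha, vK a, hcomp a ha⟩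
    · have hBne : algebraMap K L b ≠ 0 := (map_ne_zero _).mpr hb
      set d := -(a / b) with hd
      have hfac : algebraMap K L a + algebraMap K L b * s
          = algebraMap K L b * (s - algebraMap K L d) := by
        rw [hd, map_neg, sub_neg_eq_add, mul_add, ← map_mul,
          mul_div_cancel₀ a hb]
        ring
      obtain ⟨hw0, hwle⟩ := claimA d
      refine ⟨by rw [hfac]; exact mul_ne_zero hBne hw0, ?_⟩
      have hsd : ∃ j' : ℤ, vL (s - algebraMap K L d) = n * j' := by
        by_cases hd0 : d = 0
        · rw [hd0, map_zero, sub_zero, hsval]; exact ⟨0, by ring⟩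
        have hAd0 : algebraMap K L d ≠ 0 := (map_ne_zero _).mpr hd0
        rcases lt_trichotomy (vK d) 0 with hvd | hvd | hvd
        · have hndlt : (n : ℤ) * vK d < 0 :=
            mul_neg_of_pos_of_neg (by exact_mod_cast (by omega : 0 < n)) hvd
          have hdist : vL s ≠ vL (-(algebraMap K L d)) := by
            rw [aux_val_neg vL hLmul _ hAd0, hsval, hcomp d hd0]; omega
          obtain ⟨_, hmin⟩ := aux_add_distinct vL hLmul hLadd s (-(algebraMap K L d)) hs0
            (neg_ne_zero.mpr hAd0) hdist
          rw [← sub_eq_add_neg] at hmin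
          rw [hmin, aux_val_neg vL hLmul _ hAd0, hsval, hcomp d hd0]
          exact ⟨vK d, by omega⟩
        · -- vK d = 0 : valuation between 0 and 0
          have hge : (0:ℤ) ≤ vL (s - algebraMap K L d) := by
            have h := hLadd s (-(algebraMap K L d)) hs0 (neg_ne_zero.mpr hAd0)
              (by rw [← sub_eq_add_neg]; exact hw0)
            rw [← sub_eq_add_neg, aux_val_neg vL hLmul _ hAd0, hsval, hcomp d hd0, hvd] at h
            omega
          exact ⟨0, by omega⟩
        · have hndgt : (0:ℤ) < (n : ℤ) * vK d :=
            mul_pos (by exact_mod_cast (by omega : 0 < n)) hvd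
          have hdist : vL s ≠ vL (-(algebraMap K L d)) := by
            rw [aux_val_neg vL hLmul _ hAd0, hsval, hcomp d hd0]; omega
          obtain ⟨_, hmin⟩ := aux_add_distinct vL hLmul hLadd s (-(algebraMap K L d)) hs0
            (neg_ne_zero.mpr hAd0) hdist
          rw [← sub_eq_add_neg] at hmin
          rw [hmin, aux_val_neg vL hLmul _ hAd0, hsval, hcomp d hd0]
          exact ⟨0, by omega⟩
      obtain ⟨j', hj'⟩ := hsd
      exact ⟨vK b + j', by rw [hfac, hLmul _ _ hBne hw0, hcomp b hb, hj']; ring⟩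
  -- uniformizer and its powers
  obtain ⟨π, hπ0, hπv⟩ := hLsurj 1
  have hvL1 : vL 1 = 0 := aux_val_one vL hLmul
  have hπpow : ∀ i : ℕ, vL (π ^ i) = i := by
    intro i
    induction i with
    | zero => simpa using hvL1
    | succ i ih =>
      rw [pow_succ, hLmul _ _ (pow_ne_zero i hπ0) hπ0, ih, hπv]
      push_cast; ring
  -- linearly independent family of 2n elements
  set v : (Fin n ⊕ Fin n) → L := fun i => match i with
    | .inl i => π ^ (i : ℕ)
    | .inr i => s * π ^ (i : ℕ) with hv
  have hli : LinearIndependent K v := by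
    rw [Fintype.linearIndependent_iff]
    intro g hg
    set t : Fin n → L := fun i =>
      (algebraMap K L (g (.inl i)) + algebraMap K L (g (.inr i)) * s) * π ^ (i : ℕ) with htdef
    have hsumt : ∑ i : Fin n, t i = 0 := by
      rw [← hg, Fintype.sum_sum_type, ← Finset.sum_add_distrib]
      apply Finset.sum_congr rfl
      intro i _
      simp only [htdef, hv, Algebra.smul_def]
      ring
    by_contra hgne
    push_neg at hgne
    obtain ⟨i₀, hi₀⟩ := hgne
    set F : Finset (Fin n) :=
      Finset.univ.filter (fun i => ¬(g (.inl i) = 0 ∧ g (.inr i) = 0)) with hF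
    have hFsum : ∑ i ∈ F, t i = ∑ i : Fin n, t i := by
      apply Finset.sum_filter_of_ne
      intro i _ hti hboth
      apply hti
      simp [htdef, hboth.1, hboth.2]
    have hFne : F.Nonempty := by
      cases i₀ with
      | inl i => exact ⟨i, Finset.mem_filter.mpr ⟨Finset.mem_univ _, fun h => hi₀ h.1⟩⟩
      | inr i => exact ⟨i, Finset.mem_filter.mpr ⟨Finset.mem_univ _, fun h => hi₀ h.2⟩⟩
    have hterms : ∀ i ∈ F, t i ≠ 0 ∧ ∃ j : ℤ, vL (t i) = n * j + (i : ℕ) := by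
      intro i hiF
      have hab : ¬(g (.inl i) = 0 ∧ g (.inr i) = 0) := (Finset.mem_filter.mp hiF).2
      obtain ⟨hz0, j, hjv⟩ := claimB (g (.inl i)) (g (.inr i)) hab
      refine ⟨mul_ne_zero hz0 (pow_ne_zero _ hπ0), j, ?_⟩
      rw [htdef]
      rw [hLmul _ _ hz0 (pow_ne_zero _ hπ0), hjv, hπpow]
    obtain ⟨hne0, -⟩ := aux_sum_distinct vL hLmul hLadd F t hFne
      (fun i hi => (hterms i hi).1)
      (by
        intro i hi j hj hvij
        obtain ⟨-, ji, hji⟩ := hterms i hi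
        obtain ⟨-, jj, hjj⟩ := hterms j hj
        rw [hji, hjj] at hvij
        have hdvd : (n : ℤ) ∣ ((i : ℕ) : ℤ) - ((j : ℕ) : ℤ) := by
          refine ⟨jj - ji, ?_⟩
          have : (n : ℤ) * (jj - ji) = n * jj - n * ji := by ring
          omega
        have hi' : ((i : ℕ) : ℤ) < n := by exact_mod_cast i.isLt
        have hj' : ((j : ℕ) : ℤ) < n := by exact_mod_cast j.isLt
        have h0 : ((i : ℕ) : ℤ) - ((j : ℕ) : ℤ) = 0 := by
          apply Int.eq_zero_of_abs_lt_dvd hdvd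
          rw [abs_lt]
          constructor <;> [linarith [Int.ofNat_nonneg (i : ℕ)]; linarith [Int.ofNat_nonneg (j : ℕ)]]
        have : (i : ℕ) = (j : ℕ) := by omega
        exact Fin.ext this)
    rw [hFsum, hsumt] at hne0
    exact hne0 rfl
  have hcard := hli.fintype_card_le_finrank
  rw [hdeg, Fintype.card_sum, Fintype.card_fin] at hcard
  omega
end

section
/- Let $S/R$ be a finite totally ramified extension of discrete valuation rings of degree $n$, with separable fraction field extension $L/K$ of characteristic $p > 0$, and $w = v_L(\mathcal{D}_{S/R})$. For every integer $b$ with $b \not\equiv -w-1 \pmod{n}$, there exists $\rho \in L$ with $v_L(\rho) = b$ and $\mathrm{Tr}_{L/K}(\rho) = 0$. -/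
/-- Let `S/R` be a finite totally ramified extension of discrete valuation
rings of degree `n`, with separable fraction field extension `L/K` of characteristic
`p > 0`, and `w = v_L(𝒟_{S/R})`. For every integer `b` with `b ≢ -w - 1 (mod n)`, there
exists `ρ ∈ L` with `v_L(ρ) = b` and `Tr_{L/K}(ρ) = 0`. -/
theorem stmt_14 (K L : Type*) [Field K] [Field L] [Algebra K L]
    [FiniteDimensional K L] [Algebra.IsSeparable K L]
    (p : ℕ) [Fact p.Prime] [CharP K p]
    (n : ℕ) (hn : 1 ≤ n) (w : ℤ)
    (hdeg : Module.finrank K L = n)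
    (vK : K → ℤ) (vL : L → ℤ)
    -- `vK` is a normalized discrete valuation on `K`:
    (hKmul : ∀ a b : K, a ≠ 0 → b ≠ 0 → vK (a * b) = vK a + vK b)
    (hKadd : ∀ a b : K, a ≠ 0 → b ≠ 0 → a + b ≠ 0 → min (vK a) (vK b) ≤ vK (a + b))
    (hKsurj : ∀ j : ℤ, ∃ a : K, a ≠ 0 ∧ vK a = j)
    -- `vL` is a normalized discrete valuation on `L`:
    (hLmul : ∀ x y : L, x ≠ 0 → y ≠ 0 → vL (x * y) = vL x + vL y)
    (hLadd : ∀ x y : L, x ≠ 0 → y ≠ 0 → x + y ≠ 0 → min (vL x) (vL y) ≤ vL (x + y))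
    (hLsurj : ∀ j : ℤ, ∃ x : L, x ≠ 0 ∧ vL x = j)
    -- total ramification: the ramification index equals `n = [L:K]`:
    (hcomp : ∀ a : K, a ≠ 0 → vL (algebraMap K L a) = n * vK a)
    -- `w` is the valuation of the different `𝒟_{S/R}`:
    (hw1 : ∀ x : L, x ≠ 0 → -w ≤ vL x → Algebra.trace K L x ≠ 0 →
      0 ≤ vK (Algebra.trace K L x))
    (hw2 : ∃ x : L, x ≠ 0 ∧ -w - 1 ≤ vL x ∧ Algebra.trace K L x ≠ 0 ∧
      vK (Algebra.trace K L x) < 0) :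
    ∀ b : ℤ, ¬ (b ≡ -w - 1 [ZMOD (n : ℤ)]) →
      ∃ ρ : L, ρ ≠ 0 ∧ vL ρ = b ∧ Algebra.trace K L ρ = 0 := by
  intro b hb
  have hn' : (0 : ℤ) < (n : ℤ) := by exact_mod_cast hn
  -- basic facts about vL on -1
  have hL1 : vL (1 : L) = 0 := by
    have h := hLmul 1 1 one_ne_zero one_ne_zero
    rw [one_mul] at h
    omega
  have hLneg : ∀ u : L, u ≠ 0 → vL (-u) = vL u := by
    intro u hu
    have hm1 : vL (-1 : L) = 0 := by
      have h := hLmul (-1) (-1) (by simp) (by simp)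
      simp only [neg_mul_neg, one_mul] at h
      rw [hL1] at h; omega
    have := hLmul (-1) u (by simp) hu
    rw [hm1] at this
    simpa using this
  -- arithmetic decomposition of b + w
  set q : ℤ := (b + w) / (n : ℤ) with hq
  set r : ℤ := (b + w) % (n : ℤ) with hr
  have hqr : b + w = (n : ℤ) * q + r := (Int.mul_ediv_add_emod (b + w) (n : ℤ)).symm
  have hr0 : 0 ≤ r := Int.emod_nonneg _ (by positivity)
  have hrn : r < (n : ℤ) := Int.emod_lt_of_pos _ hn'
  have hrne : r ≠ (n : ℤ) - 1 := by
    intro h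
    apply hb
    rw [Int.modEq_iff_dvd]
    exact ⟨-(q + 1), by linarith⟩
  have hrle : r ≤ (n : ℤ) - 2 := by omega
  -- take x with vL x = b
  obtain ⟨x, hx0, hxb⟩ := hLsurj b
  by_cases ht : Algebra.trace K L x = 0
  · exact ⟨x, hx0, hxb, ht⟩
  · set t : K := Algebra.trace K L x with htdef
    -- lower bound on vK t
    obtain ⟨a', ha'0, ha'v⟩ := hKsurj (-q)
    have hmap' : algebraMap K L a' ≠ 0 := by
      simpa using (map_ne_zero (algebraMap K L)).mpr ha'0
    have hx'0 : algebraMap K L a' * x ≠ 0 := mul_ne_zero hmap' hx0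
    have hx'v : vL (algebraMap K L a' * x) = (n : ℤ) * (-q) + b := by
      rw [hLmul _ _ hmap' hx0, hcomp a' ha'0, ha'v, hxb]
    have htr' : Algebra.trace K L (algebraMap K L a' * x) = a' * t := by
      rw [← Algebra.smul_def, map_smul, smul_eq_mul]
    have htr'ne : Algebra.trace K L (algebraMap K L a' * x) ≠ 0 := by
      rw [htr']; exact mul_ne_zero ha'0 ht
    have hvw : -w ≤ vL (algebraMap K L a' * x) := by rw [hx'v]; linarith
    have h0 := hw1 _ hx'0 hvw htr'ne
    rw [htr', hKmul a' t ha'0 ht, ha'v] at h0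
    have htq : q ≤ vK t := by omega
    -- use the element from hw2
    obtain ⟨y, hy0, hyv, hyt, hytv⟩ := hw2
    set a : K := t / Algebra.trace K L y with hadef
    have ha0 : a ≠ 0 := div_ne_zero ht hyt
    have hat : a * Algebra.trace K L y = t := div_mul_cancel₀ t hyt
    have hva : vK t = vK a + vK (Algebra.trace K L y) := by
      rw [← hat]; exact hKmul a _ ha0 hyt
    have hvaq : q + 1 ≤ vK a := by omega
    have hmapa : algebraMap K L a ≠ 0 := by
      simpa using (map_ne_zero (algebraMap K L)).mpr ha0
    set z : L := algebraMap K L a * y with hzdef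
    have hz0 : z ≠ 0 := mul_ne_zero hmapa hy0
    have hzv : vL z = (n : ℤ) * vK a + vL y := by
      rw [hzdef, hLmul _ _ hmapa hy0, hcomp a ha0]
    have hzvgt : b < vL z := by
      have h1 : (n : ℤ) * (q + 1) ≤ (n : ℤ) * vK a :=
        mul_le_mul_of_nonneg_left hvaq (le_of_lt hn')
      have : (n : ℤ) * (q + 1) + (-w - 1) ≤ vL z := by rw [hzv]; linarith
      nlinarith
    have hzt : Algebra.trace K L z = t := by
      rw [hzdef, ← Algebra.smul_def, map_smul, smul_eq_mul, hat]
    -- the element ρ = x - z works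
    refine ⟨x - z, ?_, ?_, ?_⟩
    · intro h
      have : x = z := by rwa [sub_eq_zero] at h
      rw [this] at hxb; omega
    · have hρ0 : x - z ≠ 0 := by
        intro h
        have : x = z := by rwa [sub_eq_zero] at h
        rw [this] at hxb; omega
      have hnegz : (-z) ≠ 0 := neg_ne_zero.mpr hz0
      have hlow : min (vL x) (vL (-z)) ≤ vL (x - z) := by
        have := hLadd x (-z) hx0 hnegz (by rwa [← sub_eq_add_neg])
        rwa [← sub_eq_add_neg] at this
      rw [hLneg z hz0, hxb] at hlow
      have hup : min (vL (x - z)) (vL z) ≤ vL x := by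
        have := hLadd (x - z) z hρ0 hz0 (by rw [sub_add_cancel]; exact hx0)
        rwa [sub_add_cancel] at this
      rw [hxb] at hup
      omega
    · rw [map_sub, hzt, ← htdef, sub_self]
end

section
/- Let $S/R$ be a finite extension of discrete valuation rings with separable fraction field extension $L/K$ which is not totally ramified (i.e., the residue field extension $l/k$ has degree $f > 1$). Then for every integer $b$ there exists $\rho \in L$ with $v_L(\rho) = b$ and $\mathrm{Tr}_{L/K}(\rho) = 0$. -/
/-- Let `S/R` be a finite extension of discrete valuation rings with separable
fraction field extension `L/K` which is not totally ramified: the residue field extension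
`l/k` has degree `f > 1` (so `e · f = [L:K]` with `f > 1`, witnessed by an element `Ω` of
`S` of valuation `0` whose residue lies outside `k`). Then for every integer `b` there
exists `ρ ∈ L` with `v_L(ρ) = b` and `Tr_{L/K}(ρ) = 0`. -/
theorem stmt_15 (K L : Type*) [Field K] [Field L] [Algebra K L]
    [FiniteDimensional K L] [Algebra.IsSeparable K L]
    (vK : K → ℤ) (vL : L → ℤ) (e f : ℕ) (he : 1 ≤ e) (w : ℤ)
    -- `L/K` is not totally ramified: the residue degree `f` satisfies `f > 1`:
    (hf : 1 < f) (hef : e * f = Module.finrank K L)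
    -- `vK` is a normalized discrete valuation on `K`:
    (hKmul : ∀ a b : K, a ≠ 0 → b ≠ 0 → vK (a * b) = vK a + vK b)
    (hKadd : ∀ a b : K, a ≠ 0 → b ≠ 0 → a + b ≠ 0 → min (vK a) (vK b) ≤ vK (a + b))
    (hKsurj : ∀ n : ℤ, ∃ a : K, a ≠ 0 ∧ vK a = n)
    -- `vL` is a normalized discrete valuation on `L`:
    (hLmul : ∀ x y : L, x ≠ 0 → y ≠ 0 → vL (x * y) = vL x + vL y)
    (hLadd : ∀ x y : L, x ≠ 0 → y ≠ 0 → x + y ≠ 0 → min (vL x) (vL y) ≤ vL (x + y))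
    (hLsurj : ∀ n : ℤ, ∃ x : L, x ≠ 0 ∧ vL x = n)
    -- `e` is the ramification index:
    (hcomp : ∀ a : K, a ≠ 0 → vL (algebraMap K L a) = e * vK a)
    -- `w` is the valuation of the different `𝒟_{S/R}`:
    (hw1 : ∀ x : L, x ≠ 0 → -w ≤ vL x → Algebra.trace K L x ≠ 0 →
      0 ≤ vK (Algebra.trace K L x))
    (hw2 : ∃ x : L, x ≠ 0 ∧ -w - 1 ≤ vL x ∧ Algebra.trace K L x ≠ 0 ∧
      vK (Algebra.trace K L x) < 0)
    -- an element `Ω` of `S` of valuation `0` whose residue lies outside `k`: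
    (hΩ : ∃ Ω : L, Ω ≠ 0 ∧ vL Ω = 0 ∧ ∀ a : K, a ≠ 0 → 0 ≤ vK a →
      Ω - algebraMap K L a ≠ 0 ∧ vL (Ω - algebraMap K L a) ≤ 0) :
    ∀ b : ℤ, ∃ ρ : L, ρ ≠ 0 ∧ vL ρ = b ∧ Algebra.trace K L ρ = 0 := by
  classical
  have he' : (1:ℤ) ≤ (e:ℤ) := by exact_mod_cast he
  have hιinj : Function.Injective (algebraMap K L) := (algebraMap K L).injective
  have hι0 : ∀ a : K, a ≠ 0 → algebraMap K L a ≠ 0 := by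
    intro a ha h
    exact ha (hιinj (h.trans (map_zero (algebraMap K L)).symm))
  have hTmul : ∀ (a : K) (u : L),
      Algebra.trace K L (algebraMap K L a * u) = a * Algebra.trace K L u := by
    intro a u
    rw [← Algebra.smul_def, map_smul, smul_eq_mul]
  -- valuation basics
  have hK1 : vK 1 = 0 := by
    have h := hKmul 1 1 one_ne_zero one_ne_zero
    rw [mul_one] at h; linarith
  have hL1 : vL 1 = 0 := by
    have h := hLmul 1 1 one_ne_zero one_ne_zero
    rw [mul_one] at h; linarith
  have hLneg : ∀ x : L, x ≠ 0 → vL (-x) = vL x := by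
    intro x hx
    have hm : vL (-1 : L) = 0 := by
      have h := hLmul (-1) (-1) (by norm_num) (by norm_num)
      rw [show ((-1 : L) * -1) = 1 by ring] at h
      linarith
    have h := hLmul (-1) x (by norm_num) hx
    rw [neg_one_mul] at h
    rw [h, hm, zero_add]
  have hKinv : ∀ a : K, a ≠ 0 → vK a⁻¹ = - vK a := by
    intro a ha
    have h := hKmul a a⁻¹ ha (inv_ne_zero ha)
    rw [mul_inv_cancel₀ ha, hK1] at h
    linarith
  have hKdiv : ∀ a c : K, a ≠ 0 → c ≠ 0 → vK (a / c) = vK a - vK c := by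
    intro a c ha hc
    have h := hKmul (a/c) c (div_ne_zero ha hc) hc
    rw [div_mul_cancel₀ _ hc] at h
    linarith
  have hLinv : ∀ x : L, x ≠ 0 → vL x⁻¹ = - vL x := by
    intro x hx
    have h := hLmul x x⁻¹ hx (inv_ne_zero hx)
    rw [mul_inv_cancel₀ hx, hL1] at h
    linarith
  -- ultrametric equality when valuations differ
  have hultra : ∀ x y : L, x ≠ 0 → y ≠ 0 → vL x < vL y → x + y ≠ 0 ∧ vL (x + y) = vL x := by
    intro x y hx hy hlt
    have hne : x + y ≠ 0 := by
      intro h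
      have hyx : y = -x := eq_neg_of_add_eq_zero_right h
      rw [hyx, hLneg x hx] at hlt
      exact lt_irrefl _ hlt
    refine ⟨hne, ?_⟩
    have h1 : vL x ≤ vL (x + y) := by
      have h := hLadd x y hx hy hne
      rw [min_eq_left hlt.le] at h
      exact h
    have h2 : vL (x + y) ≤ vL x := by
      by_contra hcon
      push_neg at hcon
      have hx' : x = (x + y) + (-y) := by ring
      have h := hLadd (x + y) (-y) hne (neg_ne_zero.mpr hy) (by rw [← hx']; exact hx)
      rw [← hx', hLneg y hy] at h
      have := lt_min hcon hlt
      linarith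
    linarith
  -- build x₁ with trace 1 and vL x₁ ≥ e - w - 1
  have hx₁ex : ∃ x₁ : L, x₁ ≠ 0 ∧ Algebra.trace K L x₁ = 1 ∧ (e:ℤ) - w - 1 ≤ vL x₁ := by
    obtain ⟨x, hx0, hxv, hxT, hxK⟩ := hw2
    refine ⟨algebraMap K L (Algebra.trace K L x)⁻¹ * x,
      mul_ne_zero (hι0 _ (inv_ne_zero hxT)) hx0, ?_, ?_⟩
    · rw [hTmul, inv_mul_cancel₀ hxT]
    · have h := hLmul _ x (hι0 _ (inv_ne_zero hxT)) hx0
      rw [hcomp _ (inv_ne_zero hxT), hKinv _ hxT] at h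
      rw [h]
      have h1 : (e:ℤ) * 1 ≤ (e:ℤ) * (- vK (Algebra.trace K L x)) :=
        mul_le_mul_of_nonneg_left (by linarith) (by linarith)
      linarith
  obtain ⟨x₁, hx₁0, hx₁T, hx₁v⟩ := hx₁ex
  -- key bound from the different: vK (Tr u) ≥ (vL u + w - e + 1)/e
  have hTbound : ∀ u : L, u ≠ 0 → Algebra.trace K L u ≠ 0 →
      vL u + w - (e:ℤ) + 1 ≤ (e:ℤ) * vK (Algebra.trace K L u) := by
    intro u hu hTu
    have hep : (0:ℤ) < (e:ℤ) := by linarith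
    set t : ℤ := -w - vL u with htdef
    set m : ℤ := (t + e - 1) / e with hmdef
    have hdm := Int.mul_ediv_add_emod (t + e - 1) e
    have hr0 := Int.emod_nonneg (t + e - 1) (by linarith : (e:ℤ) ≠ 0)
    have hrlt := Int.emod_lt_of_pos (t + e - 1) hep
    have hm1 : t ≤ (e:ℤ) * m := by rw [hmdef]; linarith
    have hm2 : (e:ℤ) * m ≤ t + e - 1 := by rw [hmdef]; linarith
    obtain ⟨a, ha0, hav⟩ := hKsurj m
    have hau : algebraMap K L a * u ≠ 0 := mul_ne_zero (hι0 a ha0) hu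
    have hv : vL (algebraMap K L a * u) = (e:ℤ) * m + vL u := by
      rw [hLmul _ _ (hι0 a ha0) hu, hcomp a ha0, hav]
    have hTau : Algebra.trace K L (algebraMap K L a * u) ≠ 0 := by
      rw [hTmul]; exact mul_ne_zero ha0 hTu
    have h0 := hw1 (algebraMap K L a * u) hau (by rw [hv]; linarith) hTau
    rw [hTmul, hKmul a _ ha0 hTu, hav] at h0
    have h5 : (e:ℤ) * (-m) ≤ (e:ℤ) * vK (Algebra.trace K L u) :=
      mul_le_mul_of_nonneg_left (by linarith) (by linarith)
    rw [mul_neg] at h5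
    linarith
  have hkey : ∀ u : L, u ≠ 0 → Algebra.trace K L u ≠ 0 →
      vL u ≤ (e:ℤ) * vK (Algebra.trace K L u) + vL x₁ := by
    intro u hu hTu
    have := hTbound u hu hTu
    linarith
  obtain ⟨Ω, hΩ0, hΩv, hΩk⟩ := hΩ
  -- refined Ω property: exact valuation 0 of Ω - a
  have hΩa : ∀ a : K, a ≠ 0 → 0 ≤ vK a →
      Ω - algebraMap K L a ≠ 0 ∧ vL (Ω - algebraMap K L a) = 0 := by
    intro a ha hva
    obtain ⟨hne, hle⟩ := hΩk a ha hva
    refine ⟨hne, le_antisymm hle ?_⟩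
    have h1 : vL (-(algebraMap K L a)) = (e:ℤ) * vK a := by
      rw [hLneg _ (hι0 a ha), hcomp a ha]
    have h := hLadd Ω (-(algebraMap K L a)) hΩ0 (neg_ne_zero.mpr (hι0 a ha))
      (by rw [← sub_eq_add_neg]; exact hne)
    rw [← sub_eq_add_neg, h1, hΩv] at h
    have he0 : (0:ℤ) ≤ (e:ℤ) * vK a := mul_nonneg (by linarith) hva
    omega
  -- main argument
  intro b
  obtain ⟨z, hz0, hzb⟩ := hLsurj b
  by_cases hTz : Algebra.trace K L z = 0
  · exact ⟨z, hz0, hzb, hTz⟩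
  have hz'0 : z * Ω ≠ 0 := mul_ne_zero hz0 hΩ0
  have hz'b : vL (z * Ω) = b := by rw [hLmul z Ω hz0 hΩ0, hΩv, hzb, add_zero]
  by_cases hTz' : Algebra.trace K L (z * Ω) = 0
  · exact ⟨z * Ω, hz'0, hz'b, hTz'⟩
  -- the two candidate trace-zero elements
  have hPtr : Algebra.trace K L (z - algebraMap K L (Algebra.trace K L z) * x₁) = 0 := by
    rw [map_sub, hTmul, hx₁T, mul_one, sub_self]
  have hP'tr : Algebra.trace K L
      (z * Ω - algebraMap K L (Algebra.trace K L (z * Ω)) * x₁) = 0 := by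
    rw [map_sub, hTmul, hx₁T, mul_one, sub_self]
  have hcx : algebraMap K L (Algebra.trace K L z) * x₁ ≠ 0 :=
    mul_ne_zero (hι0 _ hTz) hx₁0
  have hcx' : algebraMap K L (Algebra.trace K L (z * Ω)) * x₁ ≠ 0 :=
    mul_ne_zero (hι0 _ hTz') hx₁0
  have hVc : vL (algebraMap K L (Algebra.trace K L z) * x₁)
      = (e:ℤ) * vK (Algebra.trace K L z) + vL x₁ := by
    rw [hLmul _ _ (hι0 _ hTz) hx₁0, hcomp _ hTz]
  have hVc' : vL (algebraMap K L (Algebra.trace K L (z * Ω)) * x₁)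
      = (e:ℤ) * vK (Algebra.trace K L (z * Ω)) + vL x₁ := by
    rw [hLmul _ _ (hι0 _ hTz') hx₁0, hcomp _ hTz']
  have hVcb : b ≤ (e:ℤ) * vK (Algebra.trace K L z) + vL x₁ := by
    rw [← hzb]; exact hkey z hz0 hTz
  have hVc'b : b ≤ (e:ℤ) * vK (Algebra.trace K L (z * Ω)) + vL x₁ := by
    rw [← hz'b]; exact hkey (z * Ω) hz'0 hTz'
  -- case P = 0
  by_cases hP0 : z - algebraMap K L (Algebra.trace K L z) * x₁ = 0
  · have hz : z = algebraMap K L (Algebra.trace K L z) * x₁ := sub_eq_zero.mp hP0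
    have hx₁Ω0 : x₁ * Ω ≠ 0 := mul_ne_zero hx₁0 hΩ0
    have hx₁Ωv : vL (x₁ * Ω) = vL x₁ := by rw [hLmul _ _ hx₁0 hΩ0, hΩv, add_zero]
    have hc'a : Algebra.trace K L (z * Ω)
        = Algebra.trace K L z * Algebra.trace K L (x₁ * Ω) := by
      conv_lhs => rw [hz, mul_assoc]
      rw [hTmul]
    have ha0 : Algebra.trace K L (x₁ * Ω) ≠ 0 := by
      intro h; exact hTz' (by rw [hc'a, h, mul_zero])
    have hva : 0 ≤ vK (Algebra.trace K L (x₁ * Ω)) := by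
      apply hw1 (x₁ * Ω) hx₁Ω0 ?_ ha0
      rw [hx₁Ωv]; linarith
    obtain ⟨hane, haeq⟩ := hΩa _ ha0 hva
    refine ⟨z * (Ω - algebraMap K L (Algebra.trace K L (x₁ * Ω))),
      mul_ne_zero hz0 hane, ?_, ?_⟩
    · rw [hLmul _ _ hz0 hane, hzb, haeq, add_zero]
    · have hza : z * algebraMap K L (Algebra.trace K L (x₁ * Ω))
          = algebraMap K L (Algebra.trace K L (z * Ω)) * x₁ := by
        conv_lhs => rw [hz]
        rw [hc'a, map_mul (algebraMap K L) (Algebra.trace K L z)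
          (Algebra.trace K L (x₁ * Ω))]
        ring
      have hform : z * (Ω - algebraMap K L (Algebra.trace K L (x₁ * Ω)))
          = z * Ω - algebraMap K L (Algebra.trace K L (z * Ω)) * x₁ := by
        rw [mul_sub, hza]
      rw [hform]
      exact hP'tr
  -- case P' = 0
  by_cases hP'0 : z * Ω - algebraMap K L (Algebra.trace K L (z * Ω)) * x₁ = 0
  · have hz' : z * Ω = algebraMap K L (Algebra.trace K L (z * Ω)) * x₁ :=
      sub_eq_zero.mp hP'0
    refine ⟨z - algebraMap K L (Algebra.trace K L z) * x₁, hP0, ?_, hPtr⟩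
    rcases lt_or_eq_of_le hVcb with hlt | heq
    · have h := (hultra z (-(algebraMap K L (Algebra.trace K L z) * x₁)) hz0
        (neg_ne_zero.mpr hcx) (by rw [hLneg _ hcx, hVc, hzb]; exact hlt)).2
      rw [← sub_eq_add_neg] at h
      rw [h, hzb]
    · -- cancellation case: use Ω
      have h2 : (e:ℤ) * vK (Algebra.trace K L (z * Ω)) + vL x₁ = b := by
        rw [← hVc', ← hz', hz'b]
      have hvcc : vK (Algebra.trace K L (z * Ω)) = vK (Algebra.trace K L z) := by
        have : (e:ℤ) * vK (Algebra.trace K L (z * Ω))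
            = (e:ℤ) * vK (Algebra.trace K L z) := by linarith
        exact mul_left_cancel₀ (by linarith : (e:ℤ) ≠ 0) this
      set a : K := Algebra.trace K L (z * Ω) / Algebra.trace K L z with hadef
      have ha0 : a ≠ 0 := div_ne_zero hTz' hTz
      have hva : vK a = 0 := by rw [hadef, hKdiv _ _ hTz' hTz, hvcc, sub_self]
      obtain ⟨hane, haeq⟩ := hΩa a ha0 (le_of_eq hva.symm)
      have hιa : algebraMap K L (Algebra.trace K L (z * Ω))
          = algebraMap K L (Algebra.trace K L z) * algebraMap K L a := by
        rw [← map_mul]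
        congr 1
        rw [hadef]
        field_simp
      have hDne : algebraMap K L a - Ω ≠ 0 :=
        sub_ne_zero.mpr (Ne.symm (sub_ne_zero.mp hane))
      have hDv : vL (algebraMap K L a - Ω) = 0 := by
        rw [show algebraMap K L a - Ω = -(Ω - algebraMap K L a) by ring,
          hLneg _ hane, haeq]
      have hform : z - algebraMap K L (Algebra.trace K L z) * x₁
          = algebraMap K L (Algebra.trace K L z) * x₁ * Ω⁻¹ * (algebraMap K L a - Ω) := by
        apply mul_right_cancel₀ hΩ0
        have hΩinv : Ω⁻¹ * Ω = 1 := inv_mul_cancel₀ hΩ0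
        calc (z - algebraMap K L (Algebra.trace K L z) * x₁) * Ω
            = z * Ω - algebraMap K L (Algebra.trace K L z) * x₁ * Ω := by ring
          _ = algebraMap K L (Algebra.trace K L (z * Ω)) * x₁
              - algebraMap K L (Algebra.trace K L z) * x₁ * Ω := by rw [← hz']
          _ = algebraMap K L (Algebra.trace K L z) * x₁ * Ω⁻¹
              * (algebraMap K L a - Ω) * Ω := by
            rw [hιa]
            have h9 : algebraMap K L (Algebra.trace K L z) * x₁ * Ω⁻¹
                  * (algebraMap K L a - Ω) * Ω
                = algebraMap K L (Algebra.trace K L z) * x₁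
                  * (algebraMap K L a - Ω) * (Ω⁻¹ * Ω) := by ring
            rw [h9, hΩinv]
            ring
      rw [hform]
      have hne1 : algebraMap K L (Algebra.trace K L z) * x₁ * Ω⁻¹ ≠ 0 :=
        mul_ne_zero hcx (inv_ne_zero hΩ0)
      rw [hLmul _ _ hne1 hDne, hLmul _ _ hcx (inv_ne_zero hΩ0), hLinv Ω hΩ0,
        hΩv, hVc, hDv]
      linarith
  -- main case: both P and P' nonzero
  by_cases hPb : vL (z - algebraMap K L (Algebra.trace K L z) * x₁) = b
  · exact ⟨_, hP0, hPb, hPtr⟩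
  by_cases hP'b : vL (z * Ω - algebraMap K L (Algebra.trace K L (z * Ω)) * x₁) = b
  · exact ⟨_, hP'0, hP'b, hP'tr⟩
  exfalso
  -- step 1: forced equalities
  have hVceq : (e:ℤ) * vK (Algebra.trace K L z) + vL x₁ = b := by
    rcases lt_or_eq_of_le hVcb with hlt | heq
    · exfalso
      have h := (hultra z (-(algebraMap K L (Algebra.trace K L z) * x₁)) hz0
        (neg_ne_zero.mpr hcx) (by rw [hLneg _ hcx, hVc, hzb]; exact hlt)).2
      rw [← sub_eq_add_neg] at h
      exact hPb (by rw [h, hzb])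
    · linarith
  have hVc'eq : (e:ℤ) * vK (Algebra.trace K L (z * Ω)) + vL x₁ = b := by
    rcases lt_or_eq_of_le hVc'b with hlt | heq
    · exfalso
      have h := (hultra (z * Ω) (-(algebraMap K L (Algebra.trace K L (z * Ω)) * x₁)) hz'0
        (neg_ne_zero.mpr hcx') (by rw [hLneg _ hcx', hVc', hz'b]; exact hlt)).2
      rw [← sub_eq_add_neg] at h
      exact hP'b (by rw [h, hz'b])
    · linarith
  have hvcc : vK (Algebra.trace K L (z * Ω)) = vK (Algebra.trace K L z) := by
    have : (e:ℤ) * vK (Algebra.trace K L (z * Ω))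
        = (e:ℤ) * vK (Algebra.trace K L z) := by linarith
    exact mul_left_cancel₀ (by linarith : (e:ℤ) ≠ 0) this
  -- step 2: both P, P' have valuation > b
  have hPge : b ≤ vL (z - algebraMap K L (Algebra.trace K L z) * x₁) := by
    have h := hLadd z (-(algebraMap K L (Algebra.trace K L z) * x₁)) hz0
      (neg_ne_zero.mpr hcx) (by rw [← sub_eq_add_neg]; exact hP0)
    rw [← sub_eq_add_neg, hLneg _ hcx, hVc, hzb] at h
    omega
  have hP'ge : b ≤ vL (z * Ω - algebraMap K L (Algebra.trace K L (z * Ω)) * x₁) := by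
    have h := hLadd (z * Ω) (-(algebraMap K L (Algebra.trace K L (z * Ω)) * x₁)) hz'0
      (neg_ne_zero.mpr hcx') (by rw [← sub_eq_add_neg]; exact hP'0)
    rw [← sub_eq_add_neg, hLneg _ hcx', hVc', hz'b] at h
    omega
  have hPgt : b < vL (z - algebraMap K L (Algebra.trace K L z) * x₁) :=
    lt_of_le_of_ne hPge (Ne.symm hPb)
  have hP'gt : b < vL (z * Ω - algebraMap K L (Algebra.trace K L (z * Ω)) * x₁) :=
    lt_of_le_of_ne hP'ge (Ne.symm hP'b)
  -- step 3: the contradiction via W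
  set a : K := Algebra.trace K L (z * Ω) / Algebra.trace K L z with hadef
  have ha0 : a ≠ 0 := div_ne_zero hTz' hTz
  have hva : vK a = 0 := by rw [hadef, hKdiv _ _ hTz' hTz, hvcc, sub_self]
  obtain ⟨hane, haeq⟩ := hΩa a ha0 (le_of_eq hva.symm)
  have hDne : algebraMap K L a - Ω ≠ 0 :=
    sub_ne_zero.mpr (Ne.symm (sub_ne_zero.mp hane))
  have hDv : vL (algebraMap K L a - Ω) = 0 := by
    rw [show algebraMap K L a - Ω = -(Ω - algebraMap K L a) by ring, hLneg _ hane, haeq]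
  have hιa : algebraMap K L (Algebra.trace K L (z * Ω))
      = algebraMap K L (Algebra.trace K L z) * algebraMap K L a := by
    rw [← map_mul]
    congr 1
    rw [hadef]
    field_simp
  have hW : algebraMap K L (Algebra.trace K L (z * Ω))
        * (z - algebraMap K L (Algebra.trace K L z) * x₁)
      - algebraMap K L (Algebra.trace K L z)
        * (z * Ω - algebraMap K L (Algebra.trace K L (z * Ω)) * x₁)
      = algebraMap K L (Algebra.trace K L z) * z * (algebraMap K L a - Ω) := by
    rw [hιa]
    ring
  have hWz : algebraMap K L (Algebra.trace K L z) * z * (algebraMap K L a - Ω) ≠ 0 :=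
    mul_ne_zero (mul_ne_zero (hι0 _ hTz) hz0) hDne
  have hWv : vL (algebraMap K L (Algebra.trace K L z) * z * (algebraMap K L a - Ω))
      = (e:ℤ) * vK (Algebra.trace K L z) + b := by
    rw [hLmul _ _ (mul_ne_zero (hι0 _ hTz) hz0) hDne, hLmul _ _ (hι0 _ hTz) hz0,
      hcomp _ hTz, hzb, hDv, add_zero]
  -- valuations of the two summands
  have hA0 : algebraMap K L (Algebra.trace K L (z * Ω))
      * (z - algebraMap K L (Algebra.trace K L z) * x₁) ≠ 0 :=
    mul_ne_zero (hι0 _ hTz') hP0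
  have hB0 : algebraMap K L (Algebra.trace K L z)
      * (z * Ω - algebraMap K L (Algebra.trace K L (z * Ω)) * x₁) ≠ 0 :=
    mul_ne_zero (hι0 _ hTz) hP'0
  have hAv : vL (algebraMap K L (Algebra.trace K L (z * Ω))
      * (z - algebraMap K L (Algebra.trace K L z) * x₁))
      = (e:ℤ) * vK (Algebra.trace K L (z * Ω))
        + vL (z - algebraMap K L (Algebra.trace K L z) * x₁) := by
    rw [hLmul _ _ (hι0 _ hTz') hP0, hcomp _ hTz']
  have hBv : vL (algebraMap K L (Algebra.trace K L z)
      * (z * Ω - algebraMap K L (Algebra.trace K L (z * Ω)) * x₁))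
      = (e:ℤ) * vK (Algebra.trace K L z)
        + vL (z * Ω - algebraMap K L (Algebra.trace K L (z * Ω)) * x₁) := by
    rw [hLmul _ _ (hι0 _ hTz) hP'0, hcomp _ hTz]
  have hsum := hLadd (algebraMap K L (Algebra.trace K L (z * Ω))
      * (z - algebraMap K L (Algebra.trace K L z) * x₁))
    (-(algebraMap K L (Algebra.trace K L z)
      * (z * Ω - algebraMap K L (Algebra.trace K L (z * Ω)) * x₁)))
    hA0 (neg_ne_zero.mpr hB0) (by rw [← sub_eq_add_neg, hW]; exact hWz)
  rw [← sub_eq_add_neg, hW, hLneg _ hB0, hWv, hAv, hBv] at hsum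
  have hmin := lt_min (by linarith : (e:ℤ) * vK (Algebra.trace K L z) + b
      < (e:ℤ) * vK (Algebra.trace K L (z * Ω))
        + vL (z - algebraMap K L (Algebra.trace K L z) * x₁))
    (by linarith : (e:ℤ) * vK (Algebra.trace K L z) + b
      < (e:ℤ) * vK (Algebra.trace K L z)
        + vL (z * Ω - algebraMap K L (Algebra.trace K L (z * Ω)) * x₁))
  linarith
end
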